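/- arXiv:1110.0517 — 6 statements merged into one kernel-verified Lean document; each statement's English description precedes it below -/
import Mathlib

section
/- If for each vertex x in G there is a subset L(x) of the open (ε−1)-neighborhood of x that covers all vertex pairs (x,y) with d(x,y)=ε (i.e., for each such pair there is a vertex z in L(x) with d(x,y)=d(x,z)+d(z,y)), then the union of all L(x) over x in V is a gate-vertex set of G: for every pair u,v with ε ≤ d(u,v) < ∞ there exists a sequence u, v₁, …, v_k, v with all vᵢ in the union, each consecutive pair at distance < ε, and the sum of consecutive distances equal to d(u,v). -/
/-- Sum of shortest-path distances between consecutive elements of a list. -/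
noncomputable def chainSum {V : Type*} (G : SimpleGraph V) : List V → ℕ
  | a :: b :: rest => G.dist a b + chainSum G (b :: rest)
  | _ => 0

/-- `S` is a gate-vertex set of `G` with locality parameter `ε`: for every non-local
pair `u,v` (connected and `ε ≤ d(u,v)`), there is a sequence `u, v₁, …, v_k, v` with all
`vᵢ ∈ S`, each consecutive pair at distance `< ε`, whose consecutive distances sum to `d(u,v)`. -/
def IsGateSet {V : Type*} (G : SimpleGraph V) (ε : ℕ) (S : Set V) : Prop :=
  ∀ u v : V, G.Reachable u v → ε ≤ G.dist u v →
    ∃ l : List V, (∀ x ∈ l, x ∈ S) ∧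
      List.Chain' (fun a b => G.dist a b < ε) (u :: (l ++ [v])) ∧
      chainSum G (u :: (l ++ [v])) = G.dist u v

/-!
Walking from `u` towards `v` along a geodesic, the vertex `y` at distance `ε` from `u` is covered
by some `z ∈ L u`, which then also lies on a geodesic from `u` to `v`. So `u` can jump to the gate
vertex `z` at a local distance without losing length, and the remaining pair `(z, v)` is strictly
closer; induction on `d(u, v)` finishes once the pair has become local.
-/

section

variable {V : Type*}

def IsGateChain (G : SimpleGraph V) (ε : ℕ) (S : Set V) (u v : V) (l : List V) : Prop :=
  (∀ x ∈ l, x ∈ S) ∧ List.IsChain (fun a b => G.dist a b < ε) (u :: (l ++ [v])) ∧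
    chainSum G (u :: (l ++ [v])) = G.dist u v

variable {G : SimpleGraph V} {ε : ℕ} {S : Set V} {L : V → Set V} {u v z : V} {l : List V}

lemma SimpleGraph.Reachable.exists_dist_eq_and_dist_add_dist_eq (h : G.Reachable u v)
    {k : ℕ} (hk : k ≤ G.dist u v) :
    ∃ y, G.Reachable y v ∧ G.dist u y = k ∧ G.dist u v = G.dist u y + G.dist y v := by
  obtain ⟨p, hp⟩ := h.exists_walk_length_eq_dist
  have h_take : G.dist u (p.getVert k) ≤ k := (G.dist_le (p.take k)).trans (by simp)
  have h_drop : G.dist (p.getVert k) v ≤ G.dist u v - k := by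
    simpa [hp] using G.dist_le (p.drop k)
  have h_tri := (p.drop k).reachable.dist_triangle_right u
  exact ⟨p.getVert k, (p.drop k).reachable, by omega, by omega⟩

lemma isGateChain_nil (h : G.dist u v < ε) : IsGateChain G ε S u v [] := by
  simp [IsGateChain, chainSum, h]

lemma IsGateChain.cons (hz : z ∈ S) (huz : G.dist u z < ε)
    (hsplit : G.dist u v = G.dist u z + G.dist z v) (h : IsGateChain G ε S z v l) :
    IsGateChain G ε S u v (z :: l) := by
  obtain ⟨hl, hchain, hsum⟩ := h
  refine ⟨?_, ?_, ?_⟩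
  · simpa [hz] using hl
  · exact List.isChain_cons_cons.mpr ⟨huz, hchain⟩
  · rw [hsplit, ← hsum]
    rfl

lemma exists_mem_localCover_dist_add_dist_eq (hL : ∀ x, ∀ z ∈ L x, 0 < G.dist x z)
    (hcov : ∀ x y : V, G.dist x y = ε → ∃ z ∈ L x, G.dist x y = G.dist x z + G.dist z y)
    (hr : G.Reachable u v) (hε : ε ≤ G.dist u v) :
    ∃ z ∈ L u, G.dist u v = G.dist u z + G.dist z v := by
  obtain ⟨y, hyv, huy, hy⟩ := hr.exists_dist_eq_and_dist_add_dist_eq hε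
  obtain ⟨z, hz, hzy⟩ := hcov u y huy
  have huz : G.Reachable u z := .of_dist_ne_zero (hL u z hz).ne'
  have h_zv := hyv.dist_triangle_right z
  have h_uv := huz.dist_triangle_left v
  exact ⟨z, hz, by omega⟩

lemma exists_isGateChain_iUnion_of_localCover
    (hL : ∀ x, ∀ z ∈ L x, 0 < G.dist x z ∧ G.dist x z < ε)
    (hcov : ∀ x y : V, G.dist x y = ε → ∃ z ∈ L x, G.dist x y = G.dist x z + G.dist z y)
    (hr : G.Reachable u v) :
    ∃ l, IsGateChain G ε (⋃ x, L x) u v l := by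
  induction h : G.dist u v using Nat.strong_induction_on generalizing u with
  | _ n ih =>
    by_cases hlocal : G.dist u v < ε
    · exact ⟨[], isGateChain_nil hlocal⟩
    obtain ⟨z, hz, hsplit⟩ :=
      exists_mem_localCover_dist_add_dist_eq (fun x z hz => (hL x z hz).1) hcov hr (by omega)
    have hz_pos := (hL u z hz).1
    have hzv : G.Reachable z v := (SimpleGraph.Reachable.of_dist_ne_zero hz_pos.ne').symm.trans hr
    obtain ⟨l, hl⟩ := ih _ (by omega) hzv rfl
    exact ⟨z :: l, hl.cons (Set.mem_iUnion_of_mem u hz) (hL u z hz).2 hsplit⟩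

end

theorem union_local_covers_isGateSet_general {V : Type*} (G : SimpleGraph V)
    (ε : ℕ) (L : V → Set V)
    (hL : ∀ x, ∀ z ∈ L x, 0 < G.dist x z ∧ G.dist x z < ε)
    (hcov : ∀ x y : V, G.dist x y = ε →
      ∃ z ∈ L x, G.dist x y = G.dist x z + G.dist z y) :
    IsGateSet G ε (⋃ x, L x) :=
  fun _ _ hr _ => exists_isGateChain_iUnion_of_localCover hL hcov hr

/-- **Sufficient local condition.** If each vertex `x` has a set `L x` inside its open
`(ε−1)`-neighborhood covering all pairs `(x,y)` with `d(x,y) = ε`, then `⋃ x, L x`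
is a gate-vertex set of `G`. -/
theorem union_local_covers_isGateSet {V : Type*} [Fintype V] (G : SimpleGraph V)
    (ε : ℕ) (hε : 0 < ε) (L : V → Set V)
    (hL : ∀ x, ∀ z ∈ L x, 0 < G.dist x z ∧ G.dist x z < ε)
    (hcov : ∀ x y : V, G.dist x y = ε →
      ∃ z ∈ L x, G.dist x y = G.dist x z + G.dist z y) :
    IsGateSet G ε (⋃ x, L x) :=
  union_local_covers_isGateSet_general G ε L hL hcov
end

section
/- Given a finite unweighted undirected graph G and integer k ≥ 1, if V* ⊆ V is a k-skip cover, then V* is a gate-vertex set of G with locality parameter ε = k+1. -/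
/-- `S` is a `k`-skip cover of `G`: for every pair of connected vertices there is a
shortest path between them such that every `k` consecutive vertices on the path
contain at least one vertex of `S`. -/
def IsKSkipCover {V : Type*} (G : SimpleGraph V) (k : ℕ) (S : Set V) : Prop :=
  ∀ u v : V, G.Reachable u v →
    ∃ p : G.Walk u v, p.length = G.dist u v ∧
      ∀ l₁ l₂ l₃ : List V, p.support = l₁ ++ l₂ ++ l₃ → l₂.length = k →
        ∃ x ∈ l₂, x ∈ S

/-!
On a shortest `u`–`v` path meeting `S` in every `k` consecutive vertices, one of the `k`
vertices after `u` is some `x ∈ S`. Being on a shortest path, `x` satisfies `d(u,x) ≤ k` and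
`d(u,x) + d(x,v) = d(u,v)`, so induction on `d(u,v)` extends the chain from `x`; pairs at
distance at most `k` need no intermediate vertex.
-/

namespace SimpleGraph.Walk

variable {V : Type*} {G : SimpleGraph V} {u v : V}

lemma dist_start_getVert_of_length_eq_dist {p : G.Walk u v} (hp : p.length = G.dist u v)
    {i : ℕ} (hi : i ≤ p.length) : G.dist u (p.getVert i) = i := by
  rw [← length_eq_dist_of_subwalk hp (p.isSubwalk_take i), take_length]
  omega

lemma dist_getVert_end_of_length_eq_dist {p : G.Walk u v} (hp : p.length = G.dist u v)
    (i : ℕ) : G.dist (p.getVert i) v = p.length - i := by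
  rw [← length_eq_dist_of_subwalk hp (p.isSubwalk_drop i), drop_length]

lemma exists_getVert_mem_of_forall_window {k : ℕ} {S : Set V} {p : G.Walk u v}
    (hp : ∀ l₁ l₂ l₃ : List V, p.support = l₁ ++ l₂ ++ l₃ → l₂.length = k → ∃ x ∈ l₂, x ∈ S)
    (hk : k ≤ p.length) : ∃ i, 0 < i ∧ i ≤ k ∧ p.getVert i ∈ S := by
  have hsplit : p.support = [u] ++ p.support.tail.take k ++ p.support.tail.drop k := by
    rw [List.append_assoc, List.take_append_drop, List.singleton_append, cons_tail_support]
  obtain ⟨x, hx, hxS⟩ := hp _ _ _ hsplit (by simp [hk])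
  obtain ⟨j, hj, rfl⟩ := List.mem_iff_getElem.mp hx
  have hj' : j < k ∧ j < p.length := by simpa using hj
  refine ⟨j + 1, j.succ_pos, hj'.1, ?_⟩
  simpa [getVert_eq_support_getElem p hj'.2] using hxS

end SimpleGraph.Walk

open SimpleGraph

theorem IsKSkipCover.exists_chain {V : Type*} {G : SimpleGraph V} {k : ℕ} {S : Set V}
    (hS : IsKSkipCover G k S) {u v : V} (huv : G.Reachable u v) :
    ∃ l : List V, (∀ x ∈ l, x ∈ S) ∧
      List.IsChain (fun a b => G.dist a b < k + 1) (u :: (l ++ [v])) ∧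
      chainSum G (u :: (l ++ [v])) = G.dist u v := by
  induction hd : G.dist u v using Nat.strong_induction_on generalizing u with
  | _ d ih =>
    by_cases hdk : d ≤ k
    · exact ⟨[], by simp, List.isChain_pair.mpr (by omega), by simp [chainSum, hd]⟩
    obtain ⟨p, hp, hwindow⟩ := hS u v huv
    obtain ⟨i, hi, hik, hxS⟩ := p.exists_getVert_mem_of_forall_window hwindow (by omega)
    have hux : G.dist u (p.getVert i) = i := p.dist_start_getVert_of_length_eq_dist hp (by omega)
    have hxv : G.dist (p.getVert i) v = d - i := by
      rw [p.dist_getVert_end_of_length_eq_dist hp, hp, hd]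
    obtain ⟨l, hlS, hlchain, hlsum⟩ := ih (d - i) (by omega) (p.drop i).reachable hxv
    refine ⟨p.getVert i :: l, List.forall_mem_cons.mpr ⟨hxS, hlS⟩,
      List.isChain_cons_cons.mpr ⟨by omega, hlchain⟩, ?_⟩
    change G.dist u (p.getVert i) + chainSum G (p.getVert i :: (l ++ [v])) = d
    omega

theorem kSkipCover_isGateSet_general {V : Type*} (G : SimpleGraph V)
    (k : ℕ) (S : Set V) (hS : IsKSkipCover G k S) :
    IsGateSet G (k + 1) S :=
  fun _ _ huv _ => hS.exists_chain huv

/-- Every `k`-skip cover of `G` (`k ≥ 1`) is a gate-vertex set of `G` with locality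
parameter `ε = k + 1`. -/
theorem kSkipCover_isGateSet {V : Type*} [Fintype V] (G : SimpleGraph V)
    (k : ℕ) (hk : 1 ≤ k) (S : Set V) (hS : IsKSkipCover G k S) :
    IsGateSet G (k + 1) S :=
  kSkipCover_isGateSet_general G k S hS
end

section
/- Every finite unweighted undirected graph G=(V,E) admits a unique shortest path system: a collection P containing, for each pair of connected vertices, exactly one shortest path between them, such that whenever two vertices u,v both lie (in that order along the paths) on two paths of P, the subpaths of those two paths between u and v are identical. -/
/-!
Fix any linear order on the vertices and let `P u v` be the shortest `u`–`v` walk whose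
vertex sequence is lexicographically least. A subwalk of a shortest walk is shortest, and if
some subwalk of `P a b` could be replaced by a lexicographically smaller shortest walk with the
same endpoints, splicing it in would give a shortest `a`–`b` walk smaller than `P a b`. Hence
every subwalk of `P a b` between `u` and `w` is `P u w` itself, which forces consistency.
-/

theorem List.append_lt_append_of_length_eq {α : Type*} [LinearOrder α] {a b : List α}
    (h : a < b) (hl : a.length = b.length) (x y : List α) : a ++ x < b ++ y := by
  induction h with
  | nil => simp at hl
  | rel hab => exact .rel hab
  | cons _ ih => exact .cons (ih (by simpa using hl))

namespace SimpleGraph.Walk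

variable {V : Type*} {G : SimpleGraph V} {u v w a b : V}

theorem support_append_append_lt [LinearOrder V] (ru : G.Walk a u) {q q' : G.Walk u w}
    (rv : G.Walk w b) (hlen : q'.length = q.length) (h : q'.support < q.support) :
    ((ru.append q').append rv).support < ((ru.append q).append rv).support := by
  have htail : q'.support.tail < q.support.tail := by
    rw [← cons_tail_support q', ← cons_tail_support q] at h
    exact List.cons_lt_cons_self.mp h
  simp only [support_append, List.append_assoc]
  refine List.append_left_lt (List.append_lt_append_of_length_eq htail ?_ _ _)
  simp [hlen]

variable [LinearOrder V]

def IsLexMinShortest (p : G.Walk u v) : Prop :=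
  p.length = G.dist u v ∧ ∀ q : G.Walk u v, q.length = G.dist u v → p.support ≤ q.support

theorem IsLexMinShortest.eq {p q : G.Walk u v} (hp : p.IsLexMinShortest)
    (hq : q.IsLexMinShortest) : p = q :=
  ext_support (le_antisymm (hp.2 q hq.1) (hq.2 p hp.1))

theorem IsLexMinShortest.of_isSubwalk {p : G.Walk a b} {q : G.Walk u v}
    (hp : p.IsLexMinShortest) (hq : q.IsSubwalk p) : q.IsLexMinShortest := by
  have hq_len : q.length = G.dist u v := G.length_eq_dist_of_subwalk hp.1 hq
  refine ⟨hq_len, fun q' hq' => not_lt.mp fun hlt => ?_⟩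
  obtain ⟨ru, rv, rfl⟩ := hq
  have hlen : ((ru.append q').append rv).length = G.dist a b := by
    rw [← hp.1]; simp [hq', hq_len]
  exact (hp.2 _ hlen).not_gt (support_append_append_lt ru rv (hq'.trans hq_len.symm) hlt)

end SimpleGraph.Walk

namespace SimpleGraph.Reachable

theorem exists_isLexMinShortest {V : Type*} [LinearOrder V] {G : SimpleGraph V} [G.LocallyFinite]
    {u v : V} (h : G.Reachable u v) : ∃ p : G.Walk u v, p.IsLexMinShortest := by
  classical
  obtain ⟨p, hp, hmin⟩ := Set.exists_min_image {p : G.Walk u v | p.length = G.dist u v}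
    Walk.support (Set.toFinite _) h.exists_walk_length_eq_dist
  exact ⟨p, hp, hmin⟩

end SimpleGraph.Reachable

open SimpleGraph

/-- **Existence of a unique shortest path system.** Every finite graph admits a choice
`P` of one shortest path (walk of length `d(u,v)`) for each pair of connected vertices,
which is consistent: whenever vertices `u, w` appear (in that order) on two chosen
paths, the subpaths of the two paths between `u` and `w` coincide. -/
theorem exists_unique_shortest_path_system
    {V : Type*} [Fintype V] [DecidableEq V] (G : SimpleGraph V) :
    ∃ P : ∀ u v : V, G.Reachable u v → G.Walk u v,
      (∀ u v h, (P u v h).length = G.dist u v) ∧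
      (∀ (a₁ b₁ : V) (h₁ : G.Reachable a₁ b₁) (a₂ b₂ : V) (h₂ : G.Reachable a₂ b₂)
        (u w : V)
        (hu₁ : u ∈ (P a₁ b₁ h₁).support)
        (hw₁ : w ∈ ((P a₁ b₁ h₁).dropUntil u hu₁).support)
        (hu₂ : u ∈ (P a₂ b₂ h₂).support)
        (hw₂ : w ∈ ((P a₂ b₂ h₂).dropUntil u hu₂).support),
        ((P a₁ b₁ h₁).dropUntil u hu₁).takeUntil w hw₁ =
          ((P a₂ b₂ h₂).dropUntil u hu₂).takeUntil w hw₂) := by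
  classical
  let : LinearOrder V := LinearOrder.lift' (Fintype.equivFin V) (Fintype.equivFin V).injective
  choose P hP using fun u v (h : G.Reachable u v) => h.exists_isLexMinShortest
  refine ⟨P, fun u v h => (hP u v h).1, ?_⟩
  intro a₁ b₁ h₁ a₂ b₂ h₂ u w hu₁ hw₁ hu₂ hw₂
  have hsub : ∀ (a b : V) (h : G.Reachable a b) (hu : u ∈ (P a b h).support)
      (hw : w ∈ ((P a b h).dropUntil u hu).support),
      (((P a b h).dropUntil u hu).takeUntil w hw).IsLexMinShortest := fun a b h hu hw =>
    (hP a b h).of_isSubwalk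
      ((Walk.isSubwalk_takeUntil _ hw).trans (Walk.isSubwalk_dropUntil _ hu))
  exact (hsub a₁ b₁ h₁ hu₁ hw₁).eq (hsub a₂ b₂ h₂ hu₂ hw₂)
end

section
/- Let P_ε be a set of shortest paths containing one shortest path for every vertex pair at distance exactly ε in G, and let P*_ε be the collection of their interiors (each path with its two endpoints removed, viewed as vertex sets; each interior has ε−1 vertices). If V* ⊆ V is an ((ε−1)/|V|)-net for the set system (V, P*_ε), then V* is a gate-vertex set of G with parameter ε. -/
/-!
A shortest walk of length `ε` is a path, so its interior has exactly `ε - 1` vertices and the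
net must meet it. Every vertex of a shortest walk splits it into two shortest walks, hence lies
on a geodesic between the ends.
-/

namespace SimpleGraph.Walk

variable {V : Type*} {G : SimpleGraph V} {u v x : V}

theorem dist_add_dist_of_mem_support [DecidableEq V] {p : G.Walk u v}
    (hp : p.length = G.dist u v) (hx : x ∈ p.support) : G.dist u x + G.dist x v = G.dist u v := by
  have hsplit := (p.take_spec hx).symm
  have hleft := length_eq_dist_of_subwalk hp (isSubwalk_of_append_left hsplit)
  have hright := length_eq_dist_of_subwalk hp (isSubwalk_of_append_right hsplit)
  rw [← hleft, ← hright, ← length_append, ← hsplit, hp]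

theorem mem_support_of_mem_support_tail_dropLast {p : G.Walk u v}
    (hx : x ∈ p.support.tail.dropLast) : x ∈ p.support :=
  List.mem_of_mem_tail ((List.dropLast_sublist _).mem hx)

theorem IsPath.card_toFinset_support_tail_dropLast [DecidableEq V] {p : G.Walk u v}
    (hp : p.IsPath) : p.support.tail.dropLast.toFinset.card = p.length - 1 := by
  have hnodup : p.support.tail.dropLast.Nodup :=
    ((List.dropLast_sublist _).trans (List.tail_sublist _)).nodup hp.support_nodup
  rw [List.toFinset_card_of_nodup hnodup, List.length_dropLast, List.length_tail,
    length_support]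
  omega

end SimpleGraph.Walk

theorem net_isGateSet_general
    {V : Type*} [Fintype V] [DecidableEq V] (G : SimpleGraph V)
    (ε : ℕ)
    (P : ∀ u v : V, G.dist u v = ε → G.Walk u v)
    (hlen : ∀ u v h, (P u v h).length = ε)
    (S : Set V)
    (hnet : ∀ u v (h : G.dist u v = ε),
      ((ε : ℚ) - 1) / (Fintype.card V) * (Fintype.card V) ≤
          ((P u v h).support.tail.dropLast).toFinset.card →
        ∃ x ∈ S, x ∈ (P u v h).support.tail.dropLast) :
    ∀ u v : V, G.dist u v = ε →
      ∃ x ∈ S, G.dist u x + G.dist x v = G.dist u v := by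
  intro u v h
  have hp : (P u v h).length = G.dist u v := (hlen u v h).trans h.symm
  have hcard : (Fintype.card V : ℚ) ≠ 0 :=
    Nat.cast_ne_zero.mpr (Fintype.card_pos_iff.mpr ⟨u⟩).ne'
  obtain ⟨x, hxS, hx⟩ := hnet u v h <| by
    rw [div_mul_cancel₀ _ hcard, (P u v h).isPath_of_length_eq_dist hp
      |>.card_toFinset_support_tail_dropLast, hlen]
    rcases ε with _ | ε <;> simp
  exact ⟨x, hxS, (P u v h).dist_add_dist_of_mem_support hp
    (SimpleGraph.Walk.mem_support_of_mem_support_tail_dropLast hx)⟩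

/-- **An `((ε−1)/|V|)`-net of path interiors is a gate-vertex set.** Let `P` choose,
for every pair of vertices at distance exactly `ε`, one shortest path between them.
If `S` is an `((ε−1)/|V|)`-net for the system of interiors of these paths (each path
with its two endpoints removed, viewed as a vertex set), i.e. `S` meets every interior
whose cardinality is at least `((ε−1)/|V|)·|V|`, then `S` is a gate-vertex set:
every pair at distance `ε` is covered by some vertex of `S`. -/
theorem net_isGateSet
    {V : Type*} [Fintype V] [DecidableEq V] (G : SimpleGraph V)
    (ε : ℕ) (hε : 2 ≤ ε)
    (P : ∀ u v : V, G.dist u v = ε → G.Walk u v)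
    (hlen : ∀ u v h, (P u v h).length = ε)
    (S : Set V)
    (hnet : ∀ u v (h : G.dist u v = ε),
      ((ε : ℚ) - 1) / (Fintype.card V) * (Fintype.card V) ≤
          ((P u v h).support.tail.dropLast).toFinset.card →
        ∃ x ∈ S, x ∈ (P u v h).support.tail.dropLast) :
    ∀ u v : V, G.dist u v = ε →
      ∃ x ∈ S, G.dist u x + G.dist x v = G.dist u v :=
  net_isGateSet_general G ε P hlen S hnet
end

section
/- There exists a graph G and parameter ε for which a gate-vertex set with locality parameter ε = k+1 is not a k-skip cover; i.e., the converse of 'every k-skip cover is a gate-vertex set with ε = k+1' fails. Concretely, for a simple path on 9 vertices with ε = 5, the single middle vertex forms a gate-vertex set, but no single vertex forms a 4-skip cover of the path. -/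
namespace SimpleGraph

variable {n : ℕ}

theorem pathGraph_natDist_le_length {u v : Fin n} (p : (pathGraph n).Walk u v) :
    Nat.dist u v ≤ p.length := by
  induction p with
  | nil => simp
  | @cons a b c hab q ih =>
    have hstep : Nat.dist a b = 1 := by
      rcases pathGraph_adj.mp hab with h | h <;> simp [Nat.dist, ← h]
    calc Nat.dist a c ≤ Nat.dist a b + Nat.dist b c := Nat.dist.triangle_inequality _ _ _
      _ ≤ 1 + q.length := by omega
      _ = (Walk.cons hab q).length := by rw [Walk.length_cons, Nat.add_comm]

theorem pathGraph_dist_le_of_val_eq_add (k : ℕ) :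
    ∀ u v : Fin n, v.val = u.val + k → (pathGraph n).dist u v ≤ k := by
  induction k with
  | zero =>
    intro u v h
    rw [Fin.ext (show u.val = v.val by omega), dist_self]
  | succ k ih =>
    intro u v h
    let w : Fin n := ⟨u + 1, by omega⟩
    have huw : (pathGraph n).Adj u w := pathGraph_adj.mpr (Or.inl rfl)
    calc (pathGraph n).dist u v ≤ (pathGraph n).dist u w + (pathGraph n).dist w v :=
          (pathGraph_preconnected n w v).dist_triangle_right u
      _ ≤ 1 + k := by
          rw [dist_eq_one_iff_adj.mpr huw]
          exact Nat.add_le_add_left (ih w v (by simp [w]; omega)) 1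
      _ = k + 1 := Nat.add_comm _ _

theorem pathGraph_dist (u v : Fin n) : (pathGraph n).dist u v = Nat.dist u v := by
  obtain ⟨p, hp⟩ := (pathGraph_preconnected n u v).exists_walk_length_eq_dist
  have hge := pathGraph_natDist_le_length p
  rcases le_total u.val v.val with h | h
  · have := pathGraph_dist_le_of_val_eq_add (v - u) u v (by omega)
    simp only [Nat.dist] at *
    omega
  · have := pathGraph_dist_le_of_val_eq_add (u - v) v u (by omega)
    rw [dist_comm] at this
    simp only [Nat.dist] at *
    omega

end SimpleGraph

theorem List.Nodup.not_subsingleton_of_forall_window {α : Type*} {l : List α} {k : ℕ}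
    {S : Set α} (hl : l.Nodup) (hk : 2 * k ≤ l.length)
    (hS : ∀ l₁ l₂ l₃ : List α, l = l₁ ++ l₂ ++ l₃ → l₂.length = k → ∃ x ∈ l₂, x ∈ S) :
    ¬ S.Subsingleton := by
  intro hsub
  obtain ⟨x, hx, hxS⟩ := hS [] (l.take k) (l.drop k) (by simp) (by simp; omega)
  obtain ⟨y, hy, hyS⟩ := hS (l.take k) ((l.drop k).take k) ((l.drop k).drop k)
    (by simp only [List.append_assoc, List.take_append_drop]) (by simp; omega)
  exact List.disjoint_take_drop hl le_rfl hx (hsub hyS hxS ▸ List.take_subset _ _ hy)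

/-- A geodesic with `2k` vertices contains two disjoint windows of `k` consecutive vertices. -/
theorem IsKSkipCover.not_subsingleton {V : Type*} {G : SimpleGraph V} {k : ℕ} {S : Set V}
    (hS : IsKSkipCover G k S) {u v : V} (huv : G.Reachable u v) (hk : 2 * k ≤ G.dist u v + 1) :
    ¬ S.Subsingleton := by
  obtain ⟨p, hp, hwindows⟩ := hS u v huv
  exact (p.isPath_of_length_eq_dist hp).support_nodup.not_subsingleton_of_forall_window
    (by rw [SimpleGraph.Walk.length_support, hp]; exact hk) hwindows

/-- The converse of “every `k`-skip cover is a gate-vertex set with `ε = k+1`” fails: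
on the simple path with 9 vertices and `ε = 5`, the middle vertex `4` alone is a
gate-vertex set, yet no single vertex is a `4`-skip cover. -/
theorem gateSet_not_kSkipCover :
    (∀ u v : Fin 9, (SimpleGraph.pathGraph 9).dist u v = 5 →
      ∃ x ∈ ({(4 : Fin 9)} : Set (Fin 9)),
        (SimpleGraph.pathGraph 9).dist u x + (SimpleGraph.pathGraph 9).dist x v =
          (SimpleGraph.pathGraph 9).dist u v) ∧
    (∀ y : Fin 9, ¬ IsKSkipCover (SimpleGraph.pathGraph 9) 4 {y}) := by
  constructor
  · intro u v huv
    refine ⟨4, rfl, ?_⟩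
    have h4 : ((4 : Fin 9) : ℕ) = 4 := rfl
    simp only [SimpleGraph.pathGraph_dist, Nat.dist, h4] at huv ⊢
    omega
  · intro y hy
    exact hy.not_subsingleton (SimpleGraph.pathGraph_preconnected 9 0 8)
      (by rw [SimpleGraph.pathGraph_dist]; decide) Set.subsingleton_singleton
end

section
/- In BFS level computation from a source u: if d(u,v) ≥ 2, then the set I(v) of all internal vertices appearing on at least one shortest path from u to v satisfies I(v) = ⋃_{(z,v)∈E, d(u,z)+1=d(u,v)} (I(z) ∪ {z}), where for neighbors z of u (d(u,z)=1) we set I(z)=∅. -/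
/-!
A vertex `x ≠ u, v` lies on a shortest `u`–`v` path exactly when it lies on a shortest `u`–`z`
path for the last vertex `z` before `v` on some shortest `x`–`v` path. Such a `z` is a neighbour of
`v` one BFS level below it, and the `u`–`x`–`z`–`v` detour stays geodesic because `z` is at
distance one less from both `x` and `u` than `v` is. Conversely, a geodesic to a neighbour `z` of
`v` one level below extends by the edge `zv` to a geodesic to `v`.
-/

/-- The set of internal vertices of shortest `u`–`v` paths. -/
def internals {V : Type*} (G : SimpleGraph V) (u v : V) : Set V :=
  {x | x ≠ u ∧ x ≠ v ∧ G.dist u x + G.dist x v = G.dist u v}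

namespace SimpleGraph

variable {V : Type*} {G : SimpleGraph V} {u v x z : V}

lemma exists_adj_dist_add_one_eq (h : G.dist x v ≠ 0) :
    ∃ z, G.Adj z v ∧ G.dist x z + 1 = G.dist x v := by
  obtain ⟨p, hp⟩ := exists_walk_of_dist_ne_zero h
  have hnil : ¬p.Nil := Walk.not_nil_iff_lt_length.mpr (by omega)
  have hadj : G.Adj p.penultimate v := Walk.adj_penultimate hnil
  refine ⟨p.penultimate, hadj, ?_⟩
  have hle : G.dist x p.penultimate ≤ p.length - 1 := p.length_dropLast ▸ dist_le p.dropLast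
  have hge : G.dist x v ≤ G.dist x p.penultimate + G.dist p.penultimate v :=
    hadj.reachable.dist_triangle_right x
  rw [dist_eq_one_iff_adj.mpr hadj] at hge
  omega

lemma reachable_of_dist_add_dist_eq (huv : G.dist u v ≠ 0)
    (hx : G.dist u x + G.dist x v = G.dist u v) : G.Reachable u x := by
  by_contra hux
  have hxv : ¬G.Reachable x v := fun hxv ↦
    hux ((Reachable.of_dist_ne_zero huv).trans hxv.symm)
  rw [dist_eq_zero_of_not_reachable hux, dist_eq_zero_of_not_reachable hxv] at hx
  omega

lemma internals_union_singleton (hzu : z ≠ u) :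
    internals G u z ∪ {z} = {x | x ≠ u ∧ G.dist u x + G.dist x z = G.dist u z} := by
  ext x
  by_cases hxz : x = z
  · subst hxz
    simp [hzu]
  · simp [internals, hxz]

lemma exists_adj_dist_add_one_eq_of_mem_internals (huv : G.dist u v ≠ 0)
    (hx : x ∈ internals G u v) :
    ∃ z, G.Adj z v ∧ G.dist u z + 1 = G.dist u v ∧ G.dist u x + G.dist x z = G.dist u z := by
  obtain ⟨-, hxv, hsum⟩ := hx
  have hux : G.Reachable u x := reachable_of_dist_add_dist_eq huv hsum
  have hxv' : G.dist x v ≠ 0 :=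
    dist_ne_zero_iff_ne_and_reachable.mpr ⟨hxv, hux.symm.trans (Reachable.of_dist_ne_zero huv)⟩
  obtain ⟨z, hadj, hxz⟩ := exists_adj_dist_add_one_eq hxv'
  have huz : G.dist u z ≤ G.dist u x + G.dist x z := hux.dist_triangle_left z
  have hzv : G.dist u v ≤ G.dist u z + G.dist z v := hadj.reachable.dist_triangle_right u
  rw [dist_eq_one_iff_adj.mpr hadj] at hzv
  exact ⟨z, hadj, by omega, by omega⟩

lemma mem_internals_of_adj_dist_add_one_eq (hadj : G.Adj z v)
    (hz : G.dist u z + 1 = G.dist u v) (huz : G.dist u z ≠ 0) (hxu : x ≠ u)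
    (hx : G.dist u x + G.dist x z = G.dist u z) : x ∈ internals G u v := by
  have hux : G.Reachable u x := reachable_of_dist_add_dist_eq huz hx
  have hxv : G.dist x v ≤ G.dist x z + G.dist z v := hadj.reachable.dist_triangle_right x
  have huv : G.dist u v ≤ G.dist u x + G.dist x v := hux.dist_triangle_left v
  rw [dist_eq_one_iff_adj.mpr hadj] at hxv
  refine ⟨hxu, ?_, by omega⟩
  rintro rfl
  rw [dist_comm (u := x), dist_eq_one_iff_adj.mpr hadj] at hx
  omega

end SimpleGraph

open SimpleGraph in
theorem internals_recursion_general
    {V : Type*} (G : SimpleGraph V) (u v : V)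
    (h2 : 2 ≤ G.dist u v) :
    internals G u v =
      ⋃ z ∈ {z : V | G.Adj z v ∧ G.dist u z + 1 = G.dist u v},
        (internals G u z ∪ {z}) := by
  have hlevel : ∀ z ∈ {z : V | G.Adj z v ∧ G.dist u z + 1 = G.dist u v}, G.dist u z ≠ 0 :=
    fun z hz ↦ by have := hz.2; omega
  rw [Set.iUnion₂_congr fun z hz ↦
    internals_union_singleton (dist_ne_zero_iff_ne_and_reachable.mp (hlevel z hz)).1.symm]
  ext x
  simp only [Set.mem_iUnion, Set.mem_ofPred_eq, exists_prop]
  constructor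
  · intro hx
    obtain ⟨z, hadj, hz, hxz⟩ := exists_adj_dist_add_one_eq_of_mem_internals (by omega) hx
    exact ⟨z, ⟨hadj, hz⟩, hx.1, hxz⟩
  · rintro ⟨z, ⟨hadj, hz⟩, hxu, hxz⟩
    exact mem_internals_of_adj_dist_add_one_eq hadj hz (hlevel z ⟨hadj, hz⟩) hxu hxz

/-- **BFS recursion for internal vertices of shortest paths.** If `d(u,v) ≥ 2`, then
`I(v) = ⋃_{(z,v) ∈ E, d(u,z)+1=d(u,v)} (I(z) ∪ {z})`, where `I(w)` is the set of
internal vertices of shortest `u`–`w` paths (so `I(z) = ∅` for neighbors `z` of `u`). -/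
theorem internals_recursion
    {V : Type*} [Fintype V] (G : SimpleGraph V) (u v : V)
    (h2 : 2 ≤ G.dist u v) :
    internals G u v =
      ⋃ z ∈ {z : V | G.Adj z v ∧ G.dist u z + 1 = G.dist u v},
        (internals G u z ∪ {z}) :=
  internals_recursion_general G u v h2
end
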